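/- For every n ≥ 1, the number of distinct nonempty palindromic factors of F[1,n] (the prefix of the Fibonacci word of length n) is exactly n. -/

import Mathlib

/-- The Fibonacci substitution `σ(a) = ab`, `σ(b) = a`, with `a = 0`, `b = 1`. -/
def fibSub : Fin 2 → List (Fin 2) := fun x => if x = 0 then [0, 1] else [0]

/-- Iterates `σ^m(a)`. -/
def fibList : ℕ → List (Fin 2)
  | 0 => [0]
  | n + 1 => (fibList n).flatMap fibSub

/-- The infinite Fibonacci word, the fixed point of `σ` beginning with `a = 0`
(0-indexed: `fibWord i` is the `(i+1)`-st letter). -/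
def fibWord (i : ℕ) : Fin 2 := (fibList (i + 1)).getD i 0

/-- The prefix `F[1,n]` of the Fibonacci word, of length `n`. -/
def fibPrefix (n : ℕ) : List (Fin 2) := (List.range n).map fibWord

/-!
Appending a letter to a word creates at most one new palindromic factor: of two new palindromic
suffixes, the shorter is a prefix of the longer, so it occurred before. Hence it suffices that
every `F[1,n+1]` has a palindromic suffix that does not occur in `F[1,n]`.

Such suffixes are produced through the substitution `σ`, which turns palindromes `p` into
palindromes `σ(p)0`. Every prefix of `F` is `σ(F[1,m])` or `σ(F[1,m])0`, and the new palindrome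
`p` of `F[1,m+1]` yields the new palindrome at the next position: `σ(p)0` in the first case,
`σ(p)` without its leading `0` in the second. Newness is pulled back by desubstituting: an
earlier occurrence of the new palindrome would come from an earlier occurrence of `p`.
-/

namespace List

variable {α : Type*}

lemma concat_suffix_concat_iff {l₁ l₂ : List α} {a b : α} :
    l₁ ++ [a] <:+ l₂ ++ [b] ↔ a = b ∧ l₁ <:+ l₂ := by
  constructor
  · rintro ⟨t, ht⟩
    rw [← append_assoc] at ht
    obtain ⟨rfl, h⟩ := append_inj' ht rfl
    exact ⟨singleton_inj.mp h, t, rfl⟩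
  · rintro ⟨rfl, t, rfl⟩
    exact ⟨t, (append_assoc _ _ _).symm⟩

def palindromicFactors (w : List α) : Set (List α) := {v | v ≠ [] ∧ v <:+: w ∧ v.Palindrome}

@[simp] lemma palindromicFactors_nil : palindromicFactors ([] : List α) = ∅ := by
  ext v
  simp +contextual [palindromicFactors]

lemma palindromicFactors_finite (w : List α) : (palindromicFactors w).Finite :=
  w.sublists.finite_toSet.subset fun _ hv => mem_sublists.mpr hv.2.1.sublist

lemma Palindrome.of_cons_append_singleton {a : α} {l : List α}
    (h : (a :: (l ++ [a])).Palindrome) : l.Palindrome :=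
  .of_reverse_eq (by simpa using h.reverse_eq)

lemma Palindrome.prefix_of_suffix {u v : List α} (hu : u.Palindrome) (hv : v.Palindrome)
    (h : u <:+ v) : u <+: v := by
  rw [← hu.reverse_eq, ← hv.reverse_eq]
  exact reverse_prefix.mpr h

lemma eq_of_palindrome_suffix_not_infix_of_length_le {w u v : List α} {x : α}
    (hu : u <:+ w ++ [x]) (hv : v <:+ w ++ [x]) (hpu : u.Palindrome) (hpv : v.Palindrome)
    (hnu : ¬ u <:+: w) (hlen : u.length ≤ v.length) : u = v := by
  have huv : u <+: v := hpu.prefix_of_suffix hpv (suffix_of_suffix_length_le hu hv hlen)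
  obtain rfl | ⟨v', rfl, hv'⟩ := suffix_concat_iff.mp hv
  · simpa using hlen
  obtain rfl | hu' := prefix_concat_iff.mp huv
  · rfl
  · exact absurd (hu'.isInfix.trans hv'.isInfix) hnu

lemma eq_of_palindrome_suffix_not_infix {w u v : List α} {x : α}
    (hu : u <:+ w ++ [x]) (hv : v <:+ w ++ [x]) (hpu : u.Palindrome) (hpv : v.Palindrome)
    (hnu : ¬ u <:+: w) (hnv : ¬ v <:+: w) : u = v := by
  rcases le_total u.length v.length with hlen | hlen
  · exact eq_of_palindrome_suffix_not_infix_of_length_le hu hv hpu hpv hnu hlen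
  · exact (eq_of_palindrome_suffix_not_infix_of_length_le hv hu hpv hpu hnv hlen).symm

lemma palindromicFactors_append_singleton {w u : List α} {x : α} (hu : u ≠ [])
    (hpu : u.Palindrome) (hsu : u <:+ w ++ [x]) (hnu : ¬ u <:+: w) :
    palindromicFactors (w ++ [x]) = insert u (palindromicFactors w) := by
  ext v
  simp only [palindromicFactors, Set.mem_insert_iff, Set.mem_ofPred_eq]
  constructor
  · rintro ⟨hv, hvw, hpv⟩
    by_cases hnv : v <:+: w
    · exact Or.inr ⟨hv, hnv, hpv⟩
    · exact Or.inl (eq_of_palindrome_suffix_not_infix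
        ((infix_concat_iff.mp hvw).resolve_right hnv) hsu hpv hpu hnv hnu)
  · rintro (rfl | ⟨hv, hvw, hpv⟩)
    · exact ⟨hu, hsu.isInfix, hpu⟩
    · exact ⟨hv, hvw.trans infix_append_left, hpv⟩

lemma ncard_palindromicFactors_append_singleton {w u : List α} {x : α} (hu : u ≠ [])
    (hpu : u.Palindrome) (hsu : u <:+ w ++ [x]) (hnu : ¬ u <:+: w) :
    (palindromicFactors (w ++ [x])).ncard = (palindromicFactors w).ncard + 1 := by
  rw [palindromicFactors_append_singleton hu hpu hsu hnu,
    Set.ncard_insert_of_notMem (fun h => hnu h.2.1) (palindromicFactors_finite w)]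

end List

namespace FibRich

open List

def fibSubst (w : List (Fin 2)) : List (Fin 2) := w.flatMap fibSub

@[simp] lemma fibSub_zero : fibSub 0 = [0, 1] := rfl

@[simp] lemma fibSub_one : fibSub 1 = [0] := rfl

@[simp] lemma fibSubst_nil : fibSubst [] = [] := rfl

@[simp] lemma fibSubst_cons (x : Fin 2) (w : List (Fin 2)) :
    fibSubst (x :: w) = fibSub x ++ fibSubst w := rfl

@[simp] lemma fibSubst_append (u v : List (Fin 2)) :
    fibSubst (u ++ v) = fibSubst u ++ fibSubst v :=
  flatMap_append

@[simp] lemma fibSubst_eq_nil_iff {w : List (Fin 2)} : fibSubst w = [] ↔ w = [] := by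
  cases w with
  | nil => rfl
  | cons x w => obtain rfl | rfl : x = 0 ∨ x = 1 := (by omega) <;> simp

lemma length_le_length_fibSubst (w : List (Fin 2)) : w.length ≤ (fibSubst w).length := by
  induction w with
  | nil => rfl
  | cons x w ih => obtain rfl | rfl : x = 0 ∨ x = 1 := (by omega) <;> simp <;> omega

lemma reverse_fibSubst_append_zero (w : List (Fin 2)) :
    (fibSubst w ++ [0]).reverse = fibSubst w.reverse ++ [0] := by
  induction w with
  | nil => rfl
  | cons x w ih =>
    obtain rfl | rfl : x = 0 ∨ x = 1 := (by omega) <;> simp_all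

lemma fibSubst_append_zero_prefix (w : List (Fin 2)) (x : Fin 2) :
    fibSubst w ++ [0] <+: fibSubst (w ++ [x]) := by
  obtain rfl | rfl : x = 0 ∨ x = 1 := (by omega) <;> simp

lemma palindrome_fibSubst_append_zero {w : List (Fin 2)} (h : w.Palindrome) :
    (fibSubst w ++ [0]).Palindrome :=
  .of_reverse_eq (by rw [reverse_fibSubst_append_zero, h.reverse_eq])

-- `{01, 0}` is a suffix code: the last letter of `σ(x)` determines `x`.
lemma suffix_of_fibSubst_suffix {u v : List (Fin 2)} (h : fibSubst u <:+ fibSubst v) :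
    u <:+ v := by
  induction v using reverseRecOn generalizing u with
  | nil => simpa using h
  | append_singleton v y ih =>
    obtain rfl | ⟨u, x, rfl⟩ := eq_nil_or_concat' u
    · exact nil_suffix
    · obtain rfl | rfl : x = 0 ∨ x = 1 := (by omega) <;>
      obtain rfl | rfl : y = 0 ∨ y = 1 := (by omega) <;>
      simp only [fibSubst_append, fibSubst_cons, fibSubst_nil, append_nil, fibSub_zero,
        fibSub_one, show ([0, 1] : List (Fin 2)) = [0] ++ [1] from rfl, ← append_assoc,
        concat_suffix_concat_iff, true_and, zero_ne_one, one_ne_zero, false_and] at h ⊢ <;>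
      exact ih h

-- Every `0` of `σ(w)` starts a block `σ(x)`, so a prefix of `σ(w)` is cut either at a block
-- boundary or right after the `0` of a block `01`.
lemma prefix_fibSubst {p w : List (Fin 2)} (h : p <+: fibSubst w) :
    (∃ w₁ w₂, w = w₁ ++ w₂ ∧ p = fibSubst w₁) ∨
      ∃ w₁ w₂, w = w₁ ++ 0 :: w₂ ∧ p = fibSubst w₁ ++ [0] := by
  induction w generalizing p with
  | nil => exact .inl ⟨[], [], rfl, by simpa using h⟩
  | cons x w ih =>
    obtain rfl | rfl : x = 0 ∨ x = 1 := (by omega)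
    · simp only [fibSubst_cons, fibSub_zero, cons_append, nil_append, prefix_cons_iff] at h
      obtain rfl | ⟨_, rfl, rfl | ⟨t, rfl, ht⟩⟩ := h
      · exact .inl ⟨[], _, rfl, rfl⟩
      · exact .inr ⟨[], w, rfl, rfl⟩
      · obtain ⟨w₁, w₂, rfl, rfl⟩ | ⟨w₁, w₂, rfl, rfl⟩ := ih ht
        · exact .inl ⟨0 :: w₁, w₂, rfl, rfl⟩
        · exact .inr ⟨0 :: w₁, w₂, rfl, rfl⟩
    · simp only [fibSubst_cons, fibSub_one, cons_append, nil_append, prefix_cons_iff] at h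
      obtain rfl | ⟨t, rfl, ht⟩ := h
      · exact .inl ⟨[], _, rfl, rfl⟩
      · obtain ⟨w₁, w₂, rfl, rfl⟩ | ⟨w₁, w₂, rfl, rfl⟩ := ih ht
        · exact .inl ⟨1 :: w₁, w₂, rfl, rfl⟩
        · exact .inr ⟨1 :: w₁, w₂, rfl, rfl⟩

lemma exists_fibSubst_eq_of_fibSubst_eq_append_zero {w a b : List (Fin 2)}
    (h : fibSubst w = a ++ 0 :: b) :
    ∃ w₁ w₂, w = w₁ ++ w₂ ∧ w₂ ≠ [] ∧ fibSubst w₁ = a := by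
  obtain ⟨w₁, w₂, rfl, rfl⟩ | ⟨w₁, w₂, rfl, rfl⟩ :=
    prefix_fibSubst (w := w) ⟨_, h.symm⟩
  · refine ⟨w₁, w₂, rfl, ?_, rfl⟩
    rintro rfl
    simp at h
  · simp at h

lemma infix_of_fibSubst_append_zero_infix {u w : List (Fin 2)} {x : Fin 2}
    (h : fibSubst u ++ [0] <:+: fibSubst (w ++ [x])) : u <:+: w := by
  obtain ⟨s, t, hst⟩ := h
  obtain ⟨w₁, w₂, hw, hw₂, hw₁⟩ :=
    exists_fibSubst_eq_of_fibSubst_eq_append_zero (w := w ++ [x]) (a := s ++ fibSubst u) (b := t)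
      (by rw [← hst]; simp)
  have hw₁w : w₁ <+: w := by
    refine (prefix_concat_iff.mp ⟨w₂, hw.symm⟩).resolve_left fun h => hw₂ ?_
    simpa [h] using hw
  exact (suffix_of_fibSubst_suffix ⟨s, hw₁.symm⟩).isInfix.trans hw₁w.isInfix

lemma zero_cons_infix_fibSubst {b w : List (Fin 2)} (h : 1 :: b <:+: fibSubst w) :
    0 :: 1 :: b <:+: fibSubst w := by
  obtain ⟨s, t, hst⟩ := h
  obtain ⟨w₁, w₂, rfl, rfl⟩ | ⟨w₁, w₂, rfl, rfl⟩ :=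
    prefix_fibSubst (p := s) ⟨1 :: b ++ t, by simpa using hst⟩
  · obtain _ | ⟨x, w₂⟩ := w₂
    · simp at hst
    · obtain rfl | rfl : x = 0 ∨ x = 1 := (by omega) <;> simp at hst
  · exact ⟨fibSubst w₁, t, by simpa using hst⟩

lemma append_zero_infix_fibSubst_append_zero {b w : List (Fin 2)}
    (h : b ++ [1] <:+: fibSubst w ++ [0]) : b ++ [1, 0] <:+: fibSubst w ++ [0] := by
  rw [← reverse_infix, reverse_fibSubst_append_zero] at h ⊢
  have := zero_cons_infix_fibSubst (w := w.reverse ++ [1]) (by simpa using h)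
  simpa using this

lemma fibList_succ (n : ℕ) : fibList (n + 1) = fibSubst (fibList n) := rfl

lemma exists_fibList_succ_eq_append (n : ℕ) : ∃ t ≠ [], fibList (n + 1) = fibList n ++ t := by
  induction n with
  | zero => exact ⟨[1], by simp, rfl⟩
  | succ n ih =>
    obtain ⟨t, ht, h⟩ := ih
    refine ⟨fibSubst t, by simpa using ht, ?_⟩
    rw [fibList_succ (n + 1), h, fibSubst_append, ← fibList_succ, h]

lemma fibList_prefix_of_le {m n : ℕ} (h : m ≤ n) : fibList m <+: fibList n := by
  induction n, h using Nat.le_induction with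
  | base => exact prefix_rfl
  | succ n _ ih =>
    obtain ⟨t, -, ht⟩ := exists_fibList_succ_eq_append n
    exact ih.trans ⟨t, ht.symm⟩

lemma lt_length_fibList (n : ℕ) : n < (fibList n).length := by
  induction n with
  | zero => simp [fibList]
  | succ n ih =>
    obtain ⟨t, ht, h⟩ := exists_fibList_succ_eq_append n
    rw [h, length_append]
    have := length_pos_iff.mpr ht
    omega

lemma getElem_fibList {N i : ℕ} (h : i < (fibList N).length) : (fibList N)[i] = fibWord i := by
  have hi : i < (fibList (i + 1)).length := (lt_length_fibList i).trans_le
    (fibList_prefix_of_le i.le_succ).length_le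
  rw [fibWord, getD_eq_getElem _ _ hi]
  rcases le_total N (i + 1) with hle | hle
  · exact (fibList_prefix_of_le hle).getElem h
  · exact ((fibList_prefix_of_le hle).getElem hi).symm

@[simp] lemma fibPrefix_zero : fibPrefix 0 = [] := rfl

@[simp] lemma length_fibPrefix (n : ℕ) : (fibPrefix n).length = n := by simp [fibPrefix]

lemma fibPrefix_succ (n : ℕ) : fibPrefix (n + 1) = fibPrefix n ++ [fibWord n] := by
  simp [fibPrefix, range_succ]

lemma eq_fibPrefix_of_prefix_fibList {l : List (Fin 2)} {N : ℕ} (h : l <+: fibList N) :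
    l = fibPrefix l.length :=
  ext_getElem (by simp) fun i hi _ => by
    rw [h.getElem hi, getElem_fibList]
    simp [fibPrefix]

lemma fibPrefix_prefix_fibList (n : ℕ) : fibPrefix n <+: fibList n := by
  have h := take_prefix n (fibList n)
  rwa [eq_fibPrefix_of_prefix_fibList h, length_take_of_le (lt_length_fibList n).le] at h

lemma fibWord_eq_of_prefix_fibList {n N : ℕ} {x : Fin 2} (h : fibPrefix n ++ [x] <+: fibList N) :
    fibWord n = x := by
  have := eq_fibPrefix_of_prefix_fibList h
  simpa [fibPrefix_succ] using this.symm

lemma fibSubst_fibPrefix_prefix_fibList (m : ℕ) : fibSubst (fibPrefix m) <+: fibList (m + 1) :=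
  (fibPrefix_prefix_fibList m).flatMap fibSub

lemma fibPrefix_cases (n : ℕ) :
    (∃ m, fibPrefix n = fibSubst (fibPrefix m)) ∨
      ∃ m, fibWord m = 0 ∧ fibPrefix n = fibSubst (fibPrefix m) ++ [0] := by
  have h : fibPrefix n <+: fibSubst (fibList n) :=
    (fibPrefix_prefix_fibList n).trans (fibList_prefix_of_le n.le_succ)
  obtain ⟨w₁, w₂, hw, hn⟩ | ⟨w₁, w₂, hw, hn⟩ := prefix_fibSubst h
  · refine .inl ⟨w₁.length, ?_⟩
    rw [hn, ← eq_fibPrefix_of_prefix_fibList ⟨w₂, hw.symm⟩]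
  · have hw₁ : w₁ ++ [0] <+: fibList n := ⟨w₂, by simp [hw]⟩
    have hw₁' := eq_fibPrefix_of_prefix_fibList ((prefix_append w₁ [0]).trans hw₁)
    rw [hw₁'] at hw₁ hn
    exact .inr ⟨w₁.length, fibWord_eq_of_prefix_fibList hw₁, hn⟩

def IsNewPalSuffix (n : ℕ) (u : List (Fin 2)) : Prop :=
  u ≠ [] ∧ u.Palindrome ∧ u <:+ fibPrefix (n + 1) ∧ ¬ u <:+: fibPrefix n

lemma IsNewPalSuffix.fibSubst_append_zero {m n : ℕ} {u : List (Fin 2)} (hu : IsNewPalSuffix m u)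
    (hn : fibPrefix n = fibSubst (fibPrefix (m + 1))) :
    IsNewPalSuffix n (fibSubst u ++ [0]) := by
  obtain ⟨-, hpal, hsuf, hnew⟩ := hu
  have hsucc : fibPrefix (n + 1) = fibPrefix n ++ [0] := by
    have h : fibPrefix n ++ [0] <+: fibList (m + 1 + 1 + 1) := hn ▸
      (fibSubst_append_zero_prefix _ _).trans
        (fibPrefix_succ (m + 1) ▸ fibSubst_fibPrefix_prefix_fibList (m + 1 + 1))
    rw [fibPrefix_succ, fibWord_eq_of_prefix_fibList h]
  refine ⟨by simp, palindrome_fibSubst_append_zero hpal, ?_, fun h => hnew ?_⟩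
  · rw [hsucc, hn]
    exact concat_suffix_concat_iff.mpr ⟨rfl, hsuf.flatMap fibSub⟩
  · rw [hn, fibPrefix_succ] at h
    exact infix_of_fibSubst_append_zero_infix h

lemma IsNewPalSuffix.tail_fibSubst {m n : ℕ} {u : List (Fin 2)} (hu : IsNewPalSuffix m u)
    (hm : fibWord m = 0) (hn : fibPrefix n = fibSubst (fibPrefix m) ++ [0]) :
    IsNewPalSuffix n (fibSubst u).tail := by
  obtain ⟨hne, hpal, hsuf, hnew⟩ := hu
  have hsucc : fibPrefix (n + 1) = fibSubst (fibPrefix (m + 1)) := by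
    have h : fibSubst (fibPrefix (m + 1)) = fibPrefix n ++ [1] := by
      simp [fibPrefix_succ, hm, hn]
    rw [fibPrefix_succ, fibWord_eq_of_prefix_fibList (h ▸ fibSubst_fibPrefix_prefix_fibList _), h]
  rw [fibPrefix_succ, hm] at hsuf
  obtain ⟨t, rfl, -⟩ := (suffix_concat_iff.mp hsuf).resolve_left hne
  have hv : fibSubst (t ++ [0]) = 0 :: 1 :: fibSubst t.reverse := by
    rw [show t ++ [0] = 0 :: t.reverse by simpa using hpal.reverse_eq.symm]
    simp
  rw [hv, tail_cons]
  refine ⟨by simp, ?_, ?_, fun h => hnew ?_⟩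
  · have := palindrome_fibSubst_append_zero hpal
    rw [hv] at this
    exact this.of_cons_append_singleton
  · rw [hsucc, fibPrefix_succ, hm]
    exact (hv ▸ suffix_cons 0 _ : _ <:+ fibSubst (t ++ [0])).trans (hsuf.flatMap fibSub)
  · -- an occurrence of `1 :: _` in `F[1,n]` extends to one of `σ(u)0`: each `1` sits between `0`s
    rw [hn] at h
    have h₁ := zero_cons_infix_fibSubst (w := fibPrefix m ++ [1]) (by simpa using h)
    rw [← hv] at h₁
    have h₂ := append_zero_infix_fibSubst_append_zero (b := fibSubst t ++ [0]) (w := fibPrefix m)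
      (by simpa using h₁)
    exact infix_of_fibSubst_append_zero_infix (x := 1) (by simpa using h₂)

lemma exists_isNewPalSuffix (n : ℕ) : ∃ u, IsNewPalSuffix n u := by
  induction n using Nat.strong_induction_on with | _ n ih
  obtain ⟨_ | m, hn⟩ | ⟨m, hm, hn⟩ := fibPrefix_cases n
  · obtain rfl : n = 0 := by simpa using congrArg length hn
    exact ⟨[0], by simp, .singleton 0, ⟨[], rfl⟩, by simp⟩
  · have hmn : m < n := by
      have h := length_le_length_fibSubst (fibPrefix (m + 1))
      rw [← hn, length_fibPrefix, length_fibPrefix] at h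
      omega
    obtain ⟨u, hu⟩ := ih m hmn
    exact ⟨_, hu.fibSubst_append_zero hn⟩
  · have hmn : m < n := by
      have h := congrArg length hn
      have hle := length_le_length_fibSubst (fibPrefix m)
      simp only [length_fibPrefix, length_append, length_singleton] at h hle
      omega
    obtain ⟨u, hu⟩ := ih m hmn
    exact ⟨_, hu.tail_fibSubst hm hn⟩

end FibRich

open FibRich List

theorem fib_rich_general (n : ℕ) :
    {w : List (Fin 2) | w ≠ [] ∧ w <:+: fibPrefix n ∧ w.Palindrome}.ncard = n := by
  change (palindromicFactors (fibPrefix n)).ncard = n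
  induction n with
  | zero => simp
  | succ n ih =>
    obtain ⟨u, hne, hpal, hsuf, hnew⟩ := exists_isNewPalSuffix n
    rw [fibPrefix_succ] at hsuf ⊢
    rw [ncard_palindromicFactors_append_singleton hne hpal hsuf hnew, ih]

/-- For every `n ≥ 1`, the prefix `F[1,n]` of the Fibonacci word contains exactly `n`
distinct nonempty palindromic factors. -/
theorem fib_rich (n : ℕ) (hn : 1 ≤ n) :
    {w : List (Fin 2) | w ≠ [] ∧ w <:+: fibPrefix n ∧ w.Palindrome}.ncard = n :=
  fib_rich_general n
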